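/- arXiv:2407.00489 — 3 statements merged into one kernel-verified Lean document; each statement's English description precedes it below -/
import Mathlib

section
/- Let $G$ be a group and $H$ a group, let $\theta\colon G \to H$ be a function and $\zeta\colon G \to \mathbb{T}$ (the circle group in $\mathbb{C}$) a function such that for all $s,t \in G$ the equality of formal measures $\zeta(s)\zeta(t)(\delta_{\theta(s)\theta(t)} + \delta_{\theta(t)\theta(s)}) = \zeta(st)\delta_{\theta(st)} + \zeta(ts)\delta_{\theta(ts)}$ holds in the free complex vector space on $H$. Then $\zeta(st)=\zeta(s)\zeta(t)$ for all $s,t$, and $\theta(st) \in \{\theta(s)\theta(t), \theta(t)\theta(s)\}$ for all $s,t$. -/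
/-!
Summing the coefficients of `ζ(s)ζ(t)(δ_{θ(s)θ(t)} + δ_{θ(t)θ(s)}) = ζ(st)δ_{θ(st)} + ζ(ts)δ_{θ(ts)}`
gives `ζ(st) + ζ(ts) = 2ζ(s)ζ(t)`; as all three numbers lie on the unit circle, strict convexity
of the disc forces `ζ(st) = ζ(ts) = ζ(s)ζ(t)`. Cancelling this nonzero scalar leaves
`δ_{θ(s)θ(t)} + δ_{θ(t)θ(s)} = δ_{θ(st)} + δ_{θ(ts)}`, and comparing coefficients at `θ(st)` puts
`θ(st)` in `{θ(s)θ(t), θ(t)θ(s)}`.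
-/

open Finsupp

lemma eq_of_add_eq_add_self_of_norm_eq {E : Type*} [NormedAddCommGroup E] [NormedSpace ℝ E]
    [StrictConvexSpace ℝ E] {x y z : E} (hx : ‖x‖ = ‖z‖) (hy : ‖y‖ = ‖z‖) (hxy : x + y = z + z) :
    x = z := by
  have hxy_eq : x = y := by
    refine eq_of_norm_eq_of_norm_add_eq (hx.trans hy.symm) ?_
    rw [hxy, ← two_smul ℝ z, norm_smul, hx, hy, Real.norm_two, two_mul]
  subst hxy_eq
  rw [← two_smul ℝ x, ← two_smul ℝ z] at hxy
  exact smul_right_injective E two_ne_zero hxy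

lemma Finsupp.eq_or_eq_of_single_add_single_eq {X R : Type*} [Semiring R] [CharZero R]
    {a b c d : X} (h : single a (1 : R) + single b 1 = single c 1 + single d 1) :
    c = a ∨ c = b := by
  classical
  by_contra! hc
  have hc_coeff := DFunLike.congr_fun h c
  simp only [add_apply, single_apply, if_neg hc.1.symm, if_neg hc.2.symm] at hc_coeff
  split_ifs at hc_coeff <;> norm_num at hc_coeff

lemma Finsupp.eq_and_eq_or_eq_of_smul_single_add_single_eq {X : Type*} {α β γ : ℂ}
    {a b c d : X} (hα : ‖α‖ = 1) (hβ : ‖β‖ = 1) (hγ : ‖γ‖ = 1)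
    (h : α • (single a (1 : ℂ) + single b 1) = β • single c 1 + γ • single d 1) :
    β = α ∧ (c = a ∨ c = b) := by
  have h_mass : β + γ = α + α := by
    simpa [two_mul] using (congrArg (linearCombination ℂ fun _ : X ↦ (1 : ℂ)) h).symm
  have hβα : β = α :=
    eq_of_add_eq_add_self_of_norm_eq (hβ.trans hα.symm) (hγ.trans hα.symm) h_mass
  have hγα : γ = α := by linear_combination h_mass - hβα
  have hα0 : α ≠ 0 := norm_ne_zero_iff.mp (by rw [hα]; exact one_ne_zero)
  have h_cancel : α • (single a (1 : ℂ) + single b 1) = α • (single c 1 + single d 1) := by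
    rw [h, hβα, hγα, smul_add]
  exact ⟨hβα, eq_or_eq_of_single_add_single_eq (smul_right_injective _ hα0 h_cancel)⟩

/-- If `ζ : G → 𝕋` and `θ : G → H` satisfy
`ζ(s)ζ(t)(δ_{θ(s)θ(t)} + δ_{θ(t)θ(s)}) = ζ(st)δ_{θ(st)} + ζ(ts)δ_{θ(ts)}`
in the free complex vector space on `H`, then `ζ` is a homomorphism and `θ` is a
half-homomorphism. -/
theorem stmt_5 {G H : Type*} [Group G] [Group H] (θ : G → H) (ζ : G → ℂ)
    (hζ : ∀ t : G, ‖ζ t‖ = 1)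
    (h : ∀ s t : G,
      (ζ s * ζ t) • ((single (θ s * θ t) 1 + single (θ t * θ s) 1 : H →₀ ℂ)) =
        ζ (s * t) • (single (θ (s * t)) 1 : H →₀ ℂ) +
          ζ (t * s) • (single (θ (t * s)) 1 : H →₀ ℂ)) :
    (∀ s t : G, ζ (s * t) = ζ s * ζ t) ∧
      (∀ s t : G, θ (s * t) = θ s * θ t ∨ θ (s * t) = θ t * θ s) := by
  have key s t := eq_and_eq_or_eq_of_smul_single_add_single_eq
    (by simp [hζ]) (hζ _) (hζ _) (h s t)
  exact ⟨fun s t ↦ (key s t).1, fun s t ↦ (key s t).2⟩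
end

section
/- Let $G$ be a group and let $\Phi\colon \mathbb{C}[G] \to \mathbb{C}[G]$ be a Jordan isomorphism of the complex group algebra such that for every $t \in G$ there exist $\zeta(t) \in \mathbb{T}$ and $\theta(t) \in G$ with $\Phi(\delta_t)=\zeta(t)\delta_{\theta(t)}$. Then $\Phi$ is either an algebra isomorphism or an algebra anti-isomorphism of $\mathbb{C}[G]$. -/
/-!
Write `Φ δ_t = ζ(t) δ_{θ(t)}`. Polarising `Φ(a²) = Φ(a)²` gives
`Φ(xy + yx) = Φx Φy + Φy Φx` and `Φ(xyz + zyx) = Φx Φy Φz + Φz Φy Φx`. On basis elements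
both sides are sums of two unimodular monomials whose coefficients on the right agree; comparing
coefficient sums, strict convexity of `ℂ` makes all four coefficients equal, and then the
monomials match termwise. Hence `F t = Φ δ_t` satisfies
`F(st) ∈ {F s F t, F t F s}` and `F(stu) ∈ {F s F t F u, F u F t F s}`, with `F t` invertible.
Such an `F` is multiplicative or anti-multiplicative: otherwise one finds `g, h` at which `F` is
multiplicative and `s, t` at which it is anti-multiplicative, with `F g, F h` and `F s, F t`
not commuting, and the two possible values of `F (g s h t)` each force one of these pairs to
commute. Multiplicativity on the basis then extends bilinearly.
-/

open MulOpposite MonoidAlgebra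

section JordanMap

variable {A B : Type*} [NonUnitalRing A] [NonUnitalRing B]

def IsJordanMap (f : A → B) : Prop := ∀ a, f (a * a) = f a * f a

namespace IsJordanMap

variable {F : Type*} [FunLike F A B] [AddMonoidHomClass F A B] {f : F}

theorem map_mul_add_map_mul_swap (hf : IsJordanMap f) (x y : A) :
    f (x * y) + f (y * x) = f x * f y + f y * f x := by
  have h := hf (x + y)
  simp only [add_mul, mul_add, map_add, hf x, hf y] at h
  linear_combination (norm := abel) h

theorem map_mul_mul_self [IsAddTorsionFree B] (hf : IsJordanMap f) (x y : A) :
    f (x * y * x) = f x * f y * f x := by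
  have h₁ := hf.map_mul_add_map_mul_swap x (x * y + y * x)
  have h₂ := hf.map_mul_add_map_mul_swap (x * x) y
  rw [map_add, hf.map_mul_add_map_mul_swap x y] at h₁
  rw [hf x] at h₂
  simp only [mul_add, add_mul, map_add, ← mul_assoc] at h₁ h₂
  refine IsAddTorsionFree.nsmul_right_injective two_ne_zero ?_
  simp only [two_nsmul]
  linear_combination (norm := abel) h₁ - h₂

theorem map_mul_mul_add_map_mul_mul_rev [IsAddTorsionFree B] (hf : IsJordanMap f)
    (x y z : A) :
    f (x * y * z) + f (z * y * x) = f x * f y * f z + f z * f y * f x := by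
  have h := hf.map_mul_mul_self (x + z) y
  simp only [mul_add, add_mul, map_add, hf.map_mul_mul_self] at h
  linear_combination (norm := abel) h

end IsJordanMap

end JordanMap

section StrictConvex

variable {E : Type*} [NormedAddCommGroup E] [NormedSpace ℝ E] [StrictConvexSpace ℝ E]

theorem eq_of_add_eq_add_self_of_norm_eq_s12 {c₁ c₂ d : E} (h₁ : ‖c₁‖ = ‖d‖) (h₂ : ‖c₂‖ = ‖d‖)
    (h : c₁ + c₂ = d + d) : c₁ = d := by
  have hc : c₁ = c₂ := by
    refine eq_of_norm_eq_of_norm_add_eq (h₁.trans h₂.symm) ?_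
    rw [h, h₁, h₂, ← two_smul ℝ d, norm_smul, Real.norm_two, two_mul]
  rw [← hc, ← two_smul ℝ, ← two_smul ℝ] at h
  exact smul_right_injective E two_ne_zero h

theorem Finsupp.single_eq_or_of_single_add_single_eq {α : Type*} {x₁ x₂ p q : α}
    {c₁ c₂ d : E} (h₁ : ‖c₁‖ = ‖d‖) (h₂ : ‖c₂‖ = ‖d‖)
    (h : single x₁ c₁ + single x₂ c₂ = single p d + single q d) :
    single x₁ c₁ = single p d ∨ single x₁ c₁ = single q d := by
  have hsum := congrArg (liftAddHom fun _ => AddMonoidHom.id E) h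
  simp only [map_add, liftAddHom_apply_single, AddMonoidHom.id_apply] at hsum
  have hc₁ : c₁ = d := eq_of_add_eq_add_self_of_norm_eq_s12 h₁ h₂ hsum
  have hc₂ : c₂ = d := add_left_cancel (hc₁ ▸ hsum)
  rw [hc₁, hc₂] at h
  rw [hc₁]
  rcases eq_or_ne d 0 with rfl | hd
  · simp
  rcases (single_add_single_eq_single_add_single hd hd).mp h with
    ⟨rfl, -⟩ | ⟨-, rfl, -⟩ | ⟨hdd, -⟩
  · exact .inl rfl
  · exact .inr rfl
  · rw [← two_smul ℝ] at hdd
    exact absurd hdd (smul_ne_zero two_ne_zero hd)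

end StrictConvex

section HalfHom

variable {G M : Type*} [Semigroup G] [Semigroup M]

structure IsJordanHalfHom (F : G → M) : Prop where
  isRegular : ∀ t, IsRegular (F t)
  map_mul : ∀ s t, F (s * t) = F s * F t ∨ F (s * t) = F t * F s
  map_mul_mul : ∀ s t u, F (s * t * u) = F s * F t * F u ∨ F (s * t * u) = F u * F t * F s

def IsMulAt (F : G → M) (g : G) : Prop :=
  ∀ y, F (g * y) = F g * F y ∧ F (y * g) = F y * F g

theorem isMulAt_op_iff {F : G → M} {g : G} :
    IsMulAt (fun t => op (F t)) g ↔ ∀ y, F (g * y) = F y * F g ∧ F (y * g) = F g * F y := by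
  simp only [IsMulAt, ← op_mul, op_inj]

namespace IsJordanHalfHom

variable {F : G → M}

protected theorem op (hF : IsJordanHalfHom F) : IsJordanHalfHom fun t => op (F t) where
  isRegular t := (hF.isRegular t).op
  map_mul s t := by simpa only [← op_mul, op_inj, or_comm] using hF.map_mul s t
  map_mul_mul s t u := by
    simpa only [← op_mul, op_inj, or_comm, mul_assoc] using hF.map_mul_mul s t u

theorem isMulAt_mul (hF : IsJordanHalfHom F) {u v : G} (huv : F (u * v) = F u * F v)
    (hc : ¬Commute (F u) (F v)) : IsMulAt F (u * v) := by
  intro y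
  constructor
  · rcases hF.map_mul_mul u v y with h | h
    · rw [h, huv]
    refine (hF.map_mul (u * v) y).resolve_right fun h' => hc ?_
    exact (hF.isRegular y).left (by beta_reduce; rw [← huv, ← h', h, mul_assoc])
  · rcases hF.map_mul_mul y u v with h | h
    · rw [← mul_assoc, h, huv, mul_assoc]
    refine (hF.map_mul y (u * v)).resolve_right fun h' => hc ?_
    exact (hF.isRegular y).right (by beta_reduce; rw [← huv, ← h', ← mul_assoc, h])

theorem exists_isMulAt (hF : IsJordanHalfHom F) (hanti : ¬∀ s t, F (s * t) = F t * F s) :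
    ∃ g h, IsMulAt F g ∧ IsMulAt F h ∧ ¬Commute (F g) (F h) := by
  push Not at hanti
  obtain ⟨a, b, hab⟩ := hanti
  have hab' : F (a * b) = F a * F b := (hF.map_mul a b).resolve_right hab
  have hc : ¬Commute (F a) (F b) := fun hc => hab (hab'.trans hc.eq)
  have hg := hF.isMulAt_mul hab' hc
  have hc' : ¬Commute (F (a * b)) (F a) := by
    rwa [hab', (hF.isRegular a).left.commute_mul_left_iff]
  refine ⟨a * b, a * b * a, hg, hF.isMulAt_mul (hg a).1 hc', ?_⟩
  rwa [(hg a).1, Commute.symm_iff, (hF.isRegular _).left.commute_mul_left_iff]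

theorem mul_or_anti (hF : IsJordanHalfHom F) :
    (∀ s t, F (s * t) = F s * F t) ∨ (∀ s t, F (s * t) = F t * F s) := by
  refine or_iff_not_and_not.mpr fun ⟨hmul, hanti⟩ => ?_
  obtain ⟨g, h, hg, hh, hgh⟩ := hF.exists_isMulAt hanti
  obtain ⟨s, t, hs, ht, hst⟩ :=
    hF.op.exists_isMulAt (by simpa only [← op_mul, op_inj] using hmul)
  rw [isMulAt_op_iff] at hs ht
  rw [commute_op] at hst
  have hgt : Commute (F g) (F t) := (hg t).1.symm.trans (ht g).2
  have hhs : Commute (F h) (F s) := (hh s).1.symm.trans (hs h).2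
  have key : F (g * s * (h * t)) = F g * (F h * F t * F s) := by
    rw [mul_assoc, (hg _).1, (hs _).1, (hh t).1]
  rcases hF.map_mul (g * s) (h * t) with e | e <;> rw [key, (hg s).1, (hh t).1] at e
  · have e' : F h * F t * F s = F s * (F h * F t) :=
      (hF.isRegular g).left (by simpa only [mul_assoc] using e)
    refine hst ((hF.isRegular h).left ?_).symm
    calc F h * (F t * F s) = F s * (F h * F t) := by rw [← e', mul_assoc]
      _ = F h * (F s * F t) := by rw [← mul_assoc, ← hhs.eq, mul_assoc]
  · have e' : F g * (F h * F t) = F h * F t * F g :=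
      (hF.isRegular s).right (by simpa only [mul_assoc] using e)
    refine hgh ((hF.isRegular t).right ?_)
    calc F g * F h * F t = F h * F t * F g := by rw [mul_assoc, e']
      _ = F h * F g * F t := by rw [mul_assoc, ← hgt.eq, mul_assoc]

end IsJordanHalfHom

end HalfHom

namespace MonoidAlgebra

theorem isUnit_single {k G : Type*} [Semiring k] [Group G] {c : k} (hc : IsUnit c) (g : G) :
    IsUnit (single g c) :=
  (Prod.isUnit_iff.mpr ⟨hc, Group.isUnit g⟩ : IsUnit (c, g)).map singleHom

theorem isJordanHalfHom_of_map_single {G H F : Type*} [Monoid G] [Group H]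
    [FunLike F (MonoidAlgebra ℂ G) (MonoidAlgebra ℂ H)]
    [AddMonoidHomClass F (MonoidAlgebra ℂ G) (MonoidAlgebra ℂ H)] {f : F} (hf : IsJordanMap f)
    {ζ : G → ℂ} {θ : G → H} (hζ : ∀ t, ‖ζ t‖ = 1)
    (hfθ : ∀ t, f (single t 1) = single (θ t) (ζ t)) :
    IsJordanHalfHom fun t => f (single t 1) := by
  have : IsAddTorsionFree (MonoidAlgebra ℂ H) := .of_module_rat _
  refine ⟨fun t => ?_, fun s t => ?_, fun s t u => ?_⟩
  · rw [hfθ]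
    exact (isUnit_single (Ne.isUnit (norm_ne_zero_iff.mp (by simp [hζ]))) _).isRegular
  · have h := hf.map_mul_add_map_mul_swap (single s 1) (single t 1)
    simp only [single_mul_single, one_mul, hfθ, mul_comm (ζ t)] at h ⊢
    simp only [← coeff_inj, coeff_add, coeff_single] at h ⊢
    exact Finsupp.single_eq_or_of_single_add_single_eq (by simp [hζ]) (by simp [hζ]) h
  · have h := hf.map_mul_mul_add_map_mul_mul_rev (single s 1) (single t 1) (single u 1)
    simp only [single_mul_single, one_mul, hfθ,
      show ζ u * ζ t * ζ s = ζ s * ζ t * ζ u by ring] at h ⊢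
    simp only [← coeff_inj, coeff_add, coeff_single] at h ⊢
    exact Finsupp.single_eq_or_of_single_add_single_eq (by simp [hζ]) (by simp [hζ]) h

variable {k G A : Type*} [CommSemiring k] [Monoid G] [Semiring A] [Algebra k A]

theorem map_mul_of_map_single_mul (f : MonoidAlgebra k G →ₗ[k] A)
    (h : ∀ s t : G, f (single (s * t) 1) = f (single s 1) * f (single t 1))
    (a b : MonoidAlgebra k G) :
    f (a * b) = f a * f b := by
  have : (LinearMap.mul k _).compr₂ f = (LinearMap.mul k A).compl₁₂ f f := by
    ext s t
    simpa [single_mul_single] using h s t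
  exact LinearMap.congr_fun₂ this a b

theorem map_mul_of_map_single_mul_rev (f : MonoidAlgebra k G →ₗ[k] A)
    (h : ∀ s t : G, f (single (s * t) 1) = f (single t 1) * f (single s 1))
    (a b : MonoidAlgebra k G) :
    f (a * b) = f b * f a := by
  have : (LinearMap.mul k _).compr₂ f = (LinearMap.mul k A).flip.compl₁₂ f f := by
    ext s t
    simpa [single_mul_single] using h s t
  exact LinearMap.congr_fun₂ this a b

end MonoidAlgebra

/-- A Jordan isomorphism of the complex group algebra `ℂ[G]` which sends each
`δ_t` to a unimodular multiple of some `δ_x` is either an algebra isomorphism or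
an algebra anti-isomorphism. -/
theorem stmt_12 {G : Type*} [Group G]
    (Φ : MonoidAlgebra ℂ G ≃ₗ[ℂ] MonoidAlgebra ℂ G)
    (hJ : ∀ a : MonoidAlgebra ℂ G, Φ (a * a) = Φ a * Φ a)
    (hδ : ∀ t : G, ∃ ζ : ℂ, ‖ζ‖ = 1 ∧ ∃ x : G,
      Φ (MonoidAlgebra.single t 1) = ζ • MonoidAlgebra.single x 1) :
    (∀ a b : MonoidAlgebra ℂ G, Φ (a * b) = Φ a * Φ b) ∨
      (∀ a b : MonoidAlgebra ℂ G, Φ (a * b) = Φ b * Φ a) := by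
  choose ζ hζ θ hθ using hδ
  have hF : IsJordanHalfHom fun t => Φ (single t 1) :=
    isJordanHalfHom_of_map_single (f := Φ) hJ hζ fun t => by rw [hθ, smul_single', mul_one]
  exact hF.mul_or_anti.imp (map_mul_of_map_single_mul Φ.toLinearMap)
    (map_mul_of_map_single_mul_rev Φ.toLinearMap)
end

section
/- Every element $f$ of an associative complex algebra that factors as $f = g h g$ (for some $g,h$) can be written as a sum of four squares: $f = f_1^2 + f_2^2 + f_3^2 + f_4^2$, where $f_1 = \tfrac{1}{\sqrt 2}(g\circ h + g)$, $f_2 = \tfrac{i}{\sqrt 2}(g\circ h - g)$, $f_3 = \tfrac12(g^2 - h)$, $f_4 = \tfrac{i}{2}(g^2 + h)$, with $x\circ y = \tfrac12(xy+yx)$. -/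
/-- In a complex associative algebra, `g h g` is a sum of the four squares
`f₁² + f₂² + f₃² + f₄²` where `f₁ = (1/√2)(g∘h + g)`, `f₂ = (i/√2)(g∘h - g)`,
`f₃ = (1/2)(g² - h)`, `f₄ = (i/2)(g² + h)`. -/
theorem stmt_14 {A : Type*} [Ring A] [Algebra ℂ A] (g h : A) :
    g * h * g =
      ((((Real.sqrt 2 : ℂ))⁻¹ • ((2 : ℂ)⁻¹ • (g * h + h * g) + g)) ^ 2 +
        ((Complex.I * (Real.sqrt 2 : ℂ)⁻¹) • ((2 : ℂ)⁻¹ • (g * h + h * g) - g)) ^ 2 +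
        ((2 : ℂ)⁻¹ • (g ^ 2 - h)) ^ 2 +
        ((Complex.I * (2 : ℂ)⁻¹) • (g ^ 2 + h)) ^ 2) := by
  have hs : ((Real.sqrt 2 : ℂ))⁻¹ ^ 2 = 2⁻¹ := by
    rw [← Complex.ofReal_inv, ← Complex.ofReal_pow]
    norm_num [Real.sq_sqrt]
  simp only [smul_pow, mul_pow, Complex.I_sq, hs, sq, mul_add, add_mul, sub_mul, mul_sub,
    smul_add, smul_sub, smul_smul, mul_smul_comm, smul_mul_assoc, mul_assoc]
  match_scalars <;> (ring_nf; simp [hs, Complex.I_sq]; try ring_nf; try norm_num)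
end
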